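/- Let m > 0, ν > 0, β ∈ (1/2, 1), and let s(y) = exp(-∫ from 1 to y of 2(m - z)/(ν² z^{2β}) dz) for y > 0. Then ∫ from ε to 1 of s(y) dy → +∞ as ε → 0⁺. -/

import Mathlib

open Real Filter MeasureTheory

/-- Divergence of the scale function of `dY = (m - Y)dt + ν Y^β dW` at the boundary `0`:
`S(ε) = ∫_ε^1 s(y) dy → +∞` as `ε → 0⁺`, where `s` is the scale density. -/
theorem scale_function_diverges_at_zero
    (m ν β : ℝ) (hm : 0 < m) (hν : 0 < ν) (hβ : 1/2 < β) (hβ1 : β < 1)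
    (s : ℝ → ℝ)
    (hs : ∀ y : ℝ, 0 < y →
      s y = Real.exp (-(∫ z in (1:ℝ)..y, 2 * (m - z) / (ν^2 * z ^ (2*β))))) :
    Tendsto (fun ε : ℝ => ∫ y in ε..(1:ℝ), s y) (nhdsWithin 0 (Set.Ioi 0)) atTop := by
  have hν2 : (0:ℝ) < ν^2 := by positivity
  set c : ℝ := 2*m/ν^2 with hc
  set k : ℝ := 2/ν^2 with hk
  set p : ℝ := 1 - 2*β with hp
  set q : ℝ := 2 - 2*β with hq
  have hp0 : p < 0 := by rw [hp]; linarith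
  have hp1 : -1 < p := by rw [hp]; linarith
  have hpne : p ≠ 0 := ne_of_lt hp0
  have hq0 : 0 < q := by rw [hq]; linarith
  have hcpos : 0 < c := by positivity
  have hkpos : 0 < k := by positivity
  obtain ⟨n, hn⟩ := exists_nat_gt (1/(-p))
  have hnpos : 0 < (n:ℝ) := lt_trans (div_pos one_pos (by linarith : (0:ℝ) < -p)) hn
  have hnne : (n:ℝ) ≠ 0 := ne_of_gt hnpos
  set w : ℝ := (n:ℝ)*p + 1 with hwdef
  have hw : w < 0 := by
    have h1 : 1 < (n:ℝ) * (-p) := by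
      rw [div_lt_iff₀ (by linarith : (0:ℝ) < -p)] at hn
      linarith
    rw [hwdef]; nlinarith
  have hwne : w ≠ 0 := ne_of_lt hw
  set A : ℝ := -(c/p) with hA
  have hApos : 0 < A := by
    rw [hA, ← div_neg]
    exact div_pos hcpos (by linarith)
  set B : ℝ := A + k/q with hB
  set D : ℝ := Real.exp (-B) * (A/n)^n with hD
  have hDpos : 0 < D := by
    rw [hD]
    exact mul_pos (Real.exp_pos _) (pow_pos (div_pos hApos hnpos) n)
  clear_value c k p q A B w D
  -- explicit formula for s on (0,1]
  set G : ℝ → ℝ := fun y => Real.exp (-(c*(y^p-1)/p - k*(y^q-1)/q)) with hG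
  have hsG : ∀ y : ℝ, 0 < y → y ≤ 1 → s y = G y := by
    intro y hy hy1
    have h0notin : (0:ℝ) ∉ Set.uIcc (1:ℝ) y := by
      rw [Set.uIcc_of_ge hy1]
      rintro ⟨h1, h2⟩; exact absurd h1 (not_le.mpr hy)
    have hcong : ∀ z ∈ Set.uIcc (1:ℝ) y,
        2 * (m - z) / (ν^2 * z ^ (2*β)) = c * z ^ (-(2*β)) - k * z ^ (1-2*β) := by
      intro z hz
      rw [Set.uIcc_of_ge hy1] at hz
      have hz0 : 0 < z := lt_of_lt_of_le hy hz.1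
      have h1 : z ^ (1-2*β) = z * z ^ (-(2*β)) := by
        rw [show (1:ℝ)-2*β = 1 + (-(2*β)) by ring, Real.rpow_add hz0, Real.rpow_one]
      have h2 : z ^ (-(2*β)) = (z ^ (2*β))⁻¹ := Real.rpow_neg hz0.le _
      have h3 : z ^ (2*β) ≠ 0 := ne_of_gt (Real.rpow_pos_of_pos hz0 _)
      rw [h1, h2, hc, hk]
      field_simp
    have hi1 : IntervalIntegrable (fun z:ℝ => z ^ (-(2*β))) volume 1 y :=
      intervalIntegral.intervalIntegrable_rpow (Or.inr h0notin)
    have hi2 : IntervalIntegrable (fun z:ℝ => z ^ (1-2*β)) volume 1 y :=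
      intervalIntegral.intervalIntegrable_rpow (Or.inr h0notin)
    have hval : (∫ z in (1:ℝ)..y, 2 * (m - z) / (ν^2 * z ^ (2*β)))
        = c*(y^p-1)/p - k*(y^q-1)/q := by
      rw [intervalIntegral.integral_congr hcong,
        intervalIntegral.integral_sub (hi1.const_mul c) (hi2.const_mul k),
        intervalIntegral.integral_const_mul, intervalIntegral.integral_const_mul,
        integral_rpow (Or.inr ⟨by intro h; rw [hp] at hpne; apply hpne; linarith [h], h0notin⟩),
        integral_rpow (Or.inl (by linarith : (-1:ℝ) < 1-2*β))]
      rw [Real.one_rpow, Real.one_rpow]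
      have e1 : -(2*β) + 1 = p := by rw [hp]; ring
      have e2 : 1-2*β + 1 = q := by rw [hq]; ring
      rw [e1, e2]
      ring
    rw [hs y hy, hval]
  -- pointwise lower bound
  have key : ∀ y : ℝ, 0 < y → y ≤ 1 → D * y ^ ((n:ℝ)*p) ≤ G y := by
    intro y hy hy1
    have hu : 0 < y ^ p := Real.rpow_pos_of_pos hy _
    have hv : 0 ≤ y ^ q := Real.rpow_nonneg hy.le _
    have hE : A * y^p - B ≤ -(c*(y^p-1)/p - k*(y^q-1)/q) := by
      have heq : -(c*(y^p-1)/p - k*(y^q-1)/q) = A * y^p - B + k*(y^q)/q := by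
        rw [hB, hA]; field_simp; ring
      have hpos : 0 ≤ k*(y^q)/q := by positivity
      linarith
    have h1 : G y = Real.exp (-(c*(y^p-1)/p - k*(y^q-1)/q)) := rfl
    have h2 : Real.exp (A * y^p - B) ≤ G y := by
      rw [h1]; exact Real.exp_le_exp.mpr hE
    have h3 : Real.exp (A * y^p - B) = Real.exp (-B) * Real.exp (A * y^p) := by
      rw [← Real.exp_add]; ring_nf
    have hx0 : 0 ≤ A * y^p / n := by positivity
    have h4 : (A * y^p / n)^n ≤ Real.exp (A * y^p) := by
      have : Real.exp (A * y^p) = (Real.exp (A * y^p / n))^n := by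
        rw [← Real.exp_nat_mul]
        congr 1
        field_simp
      rw [this]
      exact pow_le_pow_left₀ hx0 (le_trans (by linarith) (Real.add_one_le_exp _)) n
    have h5 : (A * y^p / n)^n = (A/n)^n * y ^ ((n:ℝ)*p) := by
      have : A * y^p / n = (A/n) * y^p := by ring
      rw [this, mul_pow, mul_comm (n:ℝ) p, Real.rpow_mul hy.le, Real.rpow_natCast]
    calc D * y ^ ((n:ℝ)*p) = Real.exp (-B) * ((A/n)^n * y ^ ((n:ℝ)*p)) := by rw [hD]; ring
      _ = Real.exp (-B) * (A * y^p / n)^n := by rw [h5]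
      _ ≤ Real.exp (-B) * Real.exp (A * y^p) := by
          exact mul_le_mul_of_nonneg_left h4 (Real.exp_pos _).le
      _ = Real.exp (A * y^p - B) := h3.symm
      _ ≤ G y := h2
  -- continuity of G on Ioi 0
  have hGcont : ContinuousOn G (Set.Ioi (0:ℝ)) := by
    apply Real.continuous_exp.comp_continuousOn
    apply ContinuousOn.neg
    apply ContinuousOn.sub
    · exact ((((continuousOn_id.rpow_const fun x hx =>
        Or.inl (ne_of_gt hx)).sub continuousOn_const).const_smul c).div_const p)
    · exact ((((continuousOn_id.rpow_const fun x hx =>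
        Or.inl (ne_of_gt hx)).sub continuousOn_const).const_smul k).div_const q)
  -- the lower bound function and its divergence
  have h1 : Tendsto (fun ε:ℝ => ε^w) (nhdsWithin 0 (Set.Ioi 0)) atTop := by
    have h := (tendsto_rpow_atTop (show 0 < -w by linarith)).comp tendsto_inv_nhdsGT_zero
    refine h.congr' ?_
    filter_upwards [self_mem_nhdsWithin] with x hx
    have hx0 : 0 < x := hx
    simp only [Function.comp]
    rw [Real.inv_rpow hx0.le, ← Real.rpow_neg hx0.le, neg_neg]
  have hLtendsto : Tendsto (fun ε:ℝ => D*((1 - ε^w)/w)) (nhdsWithin 0 (Set.Ioi 0)) atTop := by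
    have hc1 : (0:ℝ) < D/(-w) := div_pos hDpos (by linarith)
    have h2 := tendsto_atTop_add_const_right _ (D/w) (h1.atTop_mul_const hc1)
    refine h2.congr fun ε => ?_
    field_simp
    ring
  refine tendsto_atTop_mono' _ ?_ hLtendsto
  filter_upwards [Ioo_mem_nhdsGT_of_mem (show (0:ℝ) ∈ Set.Ico 0 1 by constructor <;> norm_num)]
    with ε hε
  obtain ⟨hε0, hε1⟩ := hε
  have hsub : Set.uIcc ε (1:ℝ) ⊆ Set.Ioi 0 := by
    rw [Set.uIcc_of_le hε1.le]
    intro x hx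
    exact lt_of_lt_of_le hε0 hx.1
  have h0notin : (0:ℝ) ∉ Set.uIcc ε 1 := fun h => absurd (Set.mem_Ioi.mp (hsub h)) (lt_irrefl 0)
  have hGint : IntervalIntegrable G volume ε 1 :=
    (hGcont.mono hsub).intervalIntegrable
  have hint : (∫ y in ε..(1:ℝ), s y) = ∫ y in ε..(1:ℝ), G y := by
    apply intervalIntegral.integral_congr
    intro y hy
    have hy' := hsub hy
    rw [Set.uIcc_of_le hε1.le] at hy
    exact hsG y hy' hy.2
  have hmono : (∫ y in ε..(1:ℝ), D * y ^ ((n:ℝ)*p)) ≤ ∫ y in ε..(1:ℝ), G y := by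
    apply intervalIntegral.integral_mono_on hε1.le
    · exact (intervalIntegral.intervalIntegrable_rpow (Or.inr h0notin)).const_mul D
    · exact hGint
    · intro y hy
      exact key y (lt_of_lt_of_le hε0 hy.1) hy.2
  have hval : (∫ y in ε..(1:ℝ), D * y ^ ((n:ℝ)*p)) = D*((1 - ε^w)/w) := by
    have hne : (n:ℝ)*p ≠ -1 := by
      intro h
      rw [hwdef, h] at hw
      norm_num at hw
    rw [intervalIntegral.integral_const_mul, integral_rpow (Or.inr ⟨hne, h0notin⟩),
      ← hwdef, Real.one_rpow]
  rw [hint]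
  calc D*((1 - ε^w)/w) = ∫ y in ε..(1:ℝ), D * y ^ ((n:ℝ)*p) := hval.symm
    _ ≤ _ := hmono
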